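/- Higher order commutator identities: Let ∂_s (s ∈ {1,2,3}) be a rectangular derivative on ℝ³, and for m ∈ ℤ_{≥0}, n ∈ ℤ³_{≥0} let Λ^m∂̸^n = Λ^m ∂̸₁₂^{n₁}∂̸₁₃^{n₂}∂̸₂₃^{n₃}. If |n| > 0, then there exist functions 𝒦_{s,i,a,b}, each smooth on ℝ³ ∖ {0}, such that for every smooth function F, [Λ^m∂̸^n, ∂_s]F = Σ_{i=1}^{m+|n|} Σ_{a+|b|=i, a ≤ m+1} 𝒦_{s,i,a,b} · Λ^a∂̸^b F on ℝ³ ∖ {0}. If |n| = 0, then there exist functions ℱ_{s,i,a,b}, smooth on ℝ³ ∖ {0}, such that [Λ^m, ∂_s]F = Σ_{i=1}^{m} Σ_{a+|b|=i, a ≤ m} ℱ_{s,i,a,b} · Λ^a∂̸^b F on ℝ³ ∖ {0}. -/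

import Mathlib

noncomputable section

open MeasureTheory Real Finset

/-- Points of `ℝ³`. -/
abbrev V3 := Fin 3 → ℝ

/-- The Euclidean norm on `ℝ³`. -/
def enorm3 (x : V3) : ℝ := Real.sqrt (∑ i, x i ^ 2)

/-- `Ω = B₁`, the closed Euclidean unit ball of `ℝ³`. -/
def Om : Set V3 := {x | enorm3 x ≤ 1}

/-- The distance to the boundary `∂Ω` of the unit ball (for points of the ball). -/
def dOm (x : V3) : ℝ := 1 - enorm3 x

/-- The partial derivative `∂ᵢ`. -/
def pd (i : Fin 3) (f : V3 → ℝ) : V3 → ℝ := fun x => fderiv ℝ f x (Pi.single i 1)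

/-- The radial derivative `Λ = xᵢ∂ᵢ`. -/
def LamOp (f : V3 → ℝ) : V3 → ℝ := fun x => ∑ i, x i * pd i f x

/-- The angular derivative `∂̸ᵢⱼ = xᵢ∂ⱼ − xⱼ∂ᵢ`. -/
def angOp (i j : Fin 3) (f : V3 → ℝ) : V3 → ℝ := fun x => x i * pd j f x - x j * pd i f x

/-- `Λ^m ∂̸₁₂^{n₁} ∂̸₁₃^{n₂} ∂̸₂₃^{n₃}`. -/
def Ndell (m n1 n2 n3 : ℕ) : (V3 → ℝ) → V3 → ℝ :=
  LamOp^[m] ∘ (angOp 0 1)^[n1] ∘ (angOp 0 2)^[n2] ∘ (angOp 1 2)^[n3]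

/-- `∇^k = ∂₁^{k₁}∂₂^{k₂}∂₃^{k₃}`. -/
def gradPow (k1 k2 k3 : ℕ) : (V3 → ℝ) → V3 → ℝ :=
  (pd 0)^[k1] ∘ (pd 1)^[k2] ∘ (pd 2)^[k3]

/-- Componentwise action of `Λ^m∂̸^n` on a vector field. -/
def NdellV (m n1 n2 n3 : ℕ) (F : V3 → V3) : V3 → V3 :=
  fun x i => Ndell m n1 n2 n3 (fun y => F y i) x

/-- Componentwise action of `∇^k` on a vector field. -/
def gradPowV (k1 k2 k3 : ℕ) (F : V3 → V3) : V3 → V3 :=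
  fun x i => gradPow k1 k2 k3 (fun y => F y i) x

/-- Squared Euclidean magnitude of a vector. -/
def sqnorm (v : V3) : ℝ := ∑ i, v i ^ 2

/-- The set of indices `(m, n₁, n₂, n₃)` with `m + |n| ≤ b`. -/
def tIdx (b : ℕ) : Finset (ℕ × ℕ × ℕ × ℕ) :=
  ((range (b+1)) ×ˢ (range (b+1)) ×ˢ (range (b+1)) ×ˢ (range (b+1))).filter
    (fun p => p.1 + p.2.1 + p.2.2.1 + p.2.2.2 ≤ b)

/-- The set of multi-indices `k = (k₁,k₂,k₃)` with `|k| ≤ b`. -/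
def kIdx (b : ℕ) : Finset (ℕ × ℕ × ℕ) :=
  ((range (b+1)) ×ˢ (range (b+1)) ×ˢ (range (b+1))).filter
    (fun q => q.1 + q.2.1 + q.2.2 ≤ b)

/-- The gradient matrix `(∇ζ)^i_j = ∂_j ζ^i`. -/
def gradMat (ζ : V3 → V3) (x : V3) : Matrix (Fin 3) (Fin 3) ℝ :=
  Matrix.of fun i j => pd j (fun y => ζ y i) x

/-- The Jacobian `𝓙 = det ∇ζ`. -/
def Jac (ζ : V3 → V3) (x : V3) : ℝ := (gradMat ζ x).det

/-- The inverse matrix `𝓐 = (∇ζ)⁻¹`. -/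
def Ainv (ζ : V3 → V3) (x : V3) : Matrix (Fin 3) (Fin 3) ℝ := (gradMat ζ x)⁻¹

/-- The Lagrangian gradient `(∇_ζ F)^i_j = 𝓐^k_j ∂_k F^i`. -/
def Dgrad (ζ F : V3 → V3) (x : V3) : Matrix (Fin 3) (Fin 3) ℝ :=
  Matrix.of fun i j => ∑ k, Ainv ζ x k j * pd k (fun y => F y i) x

/-- The Lagrangian divergence `div_ζ F = 𝓐^k_i ∂_k F^i`. -/
def Ddiv (ζ F : V3 → V3) (x : V3) : ℝ := ∑ i, ∑ k, Ainv ζ x k i * pd k (fun y => F y i) x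

/-- The Lagrangian matrix curl `(Curl_ζ F)^i_j = 𝓐^s_j ∂_s F^i − 𝓐^s_i ∂_s F^j`. -/
def Dcurl (ζ F : V3 → V3) (x : V3) : Matrix (Fin 3) (Fin 3) ℝ :=
  Matrix.of fun i j =>
    (∑ s, Ainv ζ x s j * pd s (fun y => F y i) x) - (∑ s, Ainv ζ x s i * pd s (fun y => F y j) x)

/-- Squared Frobenius magnitude of `∇_ζ G` at a point. -/
def gradSq (ζ : V3 → V3) : (V3 → V3) → V3 → ℝ := fun G x => ∑ i, ∑ j, (Dgrad ζ G x i j) ^ 2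

/-- Squared magnitude of `div_ζ G` at a point. -/
def divSq (ζ : V3 → V3) : (V3 → V3) → V3 → ℝ := fun G x => (Ddiv ζ G x) ^ 2

/-- Squared Frobenius magnitude of `Curl_ζ G` at a point. -/
def curlSq (ζ : V3 → V3) : (V3 → V3) → V3 → ℝ := fun G x => ∑ i, ∑ j, (Dcurl ζ G x i j) ^ 2

/-- The squared `X^b_κ`-norm of a scalar function. -/
def Xnorm2s (α : ℝ) (W χ : V3 → ℝ) (b : ℕ) (f : V3 → ℝ) : ℝ :=
  (∑ p ∈ tIdx b, ∫ x in Om,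
      χ x * W x ^ (α + (p.1 : ℝ)) * (Ndell p.1 p.2.1 p.2.2.1 p.2.2.2 f x) ^ 2)
  + ∑ q ∈ kIdx b, ∫ x in Om,
      (1 - χ x) * W x ^ α * (gradPow q.1 q.2.1 q.2.2 f x) ^ 2

/-- The squared `X^b_κ`-norm of a vector field. -/
def Xnorm2 (α : ℝ) (W χ : V3 → ℝ) (b : ℕ) (F : V3 → V3) : ℝ :=
  (∑ p ∈ tIdx b, ∫ x in Om,
      χ x * W x ^ (α + (p.1 : ℝ)) * sqnorm (NdellV p.1 p.2.1 p.2.2.1 p.2.2.2 F x))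
  + ∑ q ∈ kIdx b, ∫ x in Om,
      (1 - χ x) * W x ^ α * sqnorm (gradPowV q.1 q.2.1 q.2.2 F x)

/-- The squared `X^b_κ`-norm of the gradient matrix `∇μ` of a vector field `μ`. -/
def Xnorm2grad (α : ℝ) (W χ : V3 → ℝ) (b : ℕ) (μ : V3 → V3) : ℝ :=
  ∑ i, ∑ j, Xnorm2s α W χ b (fun x => pd j (fun y => μ y i) x)

/-- The squared `Y^b_κ[𝒟]`-seminorm, for the pointwise squared magnitude `Dsq` of a
Lagrangian derivative operator `𝒟`. -/
def Ynorm2 (α : ℝ) (W χ : V3 → ℝ) (ζ : V3 → V3) (b : ℕ)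
    (Dsq : (V3 → V3) → V3 → ℝ) (F : V3 → V3) : ℝ :=
  (∑ p ∈ tIdx b, ∫ x in Om,
      χ x * W x ^ (1 + α + (p.1 : ℝ)) * Jac ζ x ^ (-(1/α)) *
        Dsq (NdellV p.1 p.2.1 p.2.2.1 p.2.2.2 F) x)
  + ∑ q ∈ kIdx b, ∫ x in Om,
      (1 - χ x) * W x ^ (1 + α) * Jac ζ x ^ (-(1/α)) *
        Dsq (gradPowV q.1 q.2.1 q.2.2 F) x

/-- Membership in `X^b_κ` for a scalar function: all weighted derivatives are square
integrable with the appropriate weights. -/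
def MemXs (α : ℝ) (W χ : V3 → ℝ) (b : ℕ) (f : V3 → ℝ) : Prop :=
  (∀ p ∈ tIdx b, IntegrableOn
      (fun x => χ x * W x ^ (α + (p.1 : ℝ)) * (Ndell p.1 p.2.1 p.2.2.1 p.2.2.2 f x) ^ 2) Om) ∧
  ∀ q ∈ kIdx b, IntegrableOn
      (fun x => (1 - χ x) * W x ^ α * (gradPow q.1 q.2.1 q.2.2 f x) ^ 2) Om

/-- Membership in `X^b_κ` for a vector field. -/
def MemX (α : ℝ) (W χ : V3 → ℝ) (b : ℕ) (F : V3 → V3) : Prop :=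
  ∀ i : Fin 3, MemXs α W χ b (fun x => F x i)

/-- `∇μ ∈ X^b_κ` for a vector field `μ`. -/
def MemXgrad (α : ℝ) (W χ : V3 → ℝ) (b : ℕ) (μ : V3 → V3) : Prop :=
  ∀ i j : Fin 3, MemXs α W χ b (fun x => pd j (fun y => μ y i) x)

/-- Membership in `Y^b_κ[Curl_ζ]`. -/
def MemYcurl (α : ℝ) (W χ : V3 → ℝ) (ζ : V3 → V3) (b : ℕ) (F : V3 → V3) : Prop :=
  (∀ p ∈ tIdx b, IntegrableOn
      (fun x => χ x * W x ^ (1 + α + (p.1 : ℝ)) * Jac ζ x ^ (-(1/α)) *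
        curlSq ζ (NdellV p.1 p.2.1 p.2.2.1 p.2.2.2 F) x) Om) ∧
  ∀ q ∈ kIdx b, IntegrableOn
      (fun x => (1 - χ x) * W x ^ (1 + α) * Jac ζ x ^ (-(1/α)) *
        curlSq ζ (gradPowV q.1 q.2.1 q.2.2 F) x) Om

/-- The gradient of a scalar function, as a vector field. -/
def gradScalar (f : V3 → ℝ) : V3 → V3 := fun x i => pd i f x

/-- An admissible enthalpy profile on the closed unit ball: positive inside, vanishing on
the boundary, comparable to the distance function to the boundary, with smooth ratio. -/
def AdmissibleProfile (W : V3 → ℝ) : Prop :=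
  (∀ x, enorm3 x < 1 → 0 < W x) ∧
  (∀ x, enorm3 x = 1 → W x = 0) ∧
  (∃ C > 0, ∀ x ∈ Om, (1/C) * dOm x ≤ W x ∧ W x ≤ C * dOm x) ∧
  ∃ g : V3 → ℝ, ContDiffOn ℝ (⊤ : ℕ∞) g Om ∧ ∀ x ∈ Om, W x = g x * dOm x

/-- A smooth radial cutoff `χ` on the unit ball: `χ = 0` for `|x| ≤ 1/4` and `χ = 1`
for `3/4 ≤ |x| ≤ 1`. -/
def Cutoff (χ : V3 → ℝ) : Prop :=
  ContDiff ℝ (⊤ : ℕ∞) χ ∧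
  (∀ x y : V3, enorm3 x = enorm3 y → χ x = χ y) ∧
  (∀ x : V3, enorm3 x ≤ 1/4 → χ x = 0) ∧
  (∀ x : V3, 3/4 ≤ enorm3 x → enorm3 x ≤ 1 → χ x = 1) ∧
  ∀ x : V3, 0 ≤ χ x ∧ χ x ≤ 1

/-- The flow-map ansatz `ζ_κ(τ,x) = x + e^{−τ}x̄_κ + (1−e^{−τ})μ_κ(x) + θ_κ(τ,x)`. -/
def zeta (xbar : V3) (μ : V3 → V3) (θ : ℝ → V3 → V3) (τ : ℝ) : V3 → V3 :=
  fun x => x + Real.exp (-τ) • xbar + (1 - Real.exp (-τ)) • μ x + θ τ x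

/-- Time derivative `∂_τ θ`. -/
def tderiv (θ : ℝ → V3 → V3) (τ : ℝ) : V3 → V3 := fun x => deriv (fun s => θ s x) τ

/-- The self-interaction term
`𝒢^i(τ,x) = δ^α e^{−τ} ∫_Ω ∂_{z_k}(𝓐^k_i W^α)(z)/|ζ(τ,x) − ζ(τ,z)| dz`. -/
def selfG (α δ τ : ℝ) (W : V3 → ℝ) (ζ : V3 → V3) (x : V3) (i : Fin 3) : ℝ :=
  δ ^ α * Real.exp (-τ) *
    ∫ z in Om, (∑ k, pd k (fun y => Ainv ζ y k i * W y ^ α) z) / enorm3 (ζ x - ζ z)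

/-- The tidal term
`𝓘^i_{[κ,κ']}(τ,x) = δ^α e^{−τ} ∫_Ω (ζ_κ^i(τ,x) − ζ_{κ'}^i(τ,z)) W_{κ'}^α(z)/|ζ_κ(τ,x) − ζ_{κ'}(τ,z)|³ dz`. -/
def tidalI (α δ τ : ℝ) (W' : V3 → ℝ) (ζx ζz : V3 → V3) (x : V3) (i : Fin 3) : ℝ :=
  δ ^ α * Real.exp (-τ) *
    ∫ z in Om, (ζx x i - ζz z i) * W' z ^ α / enorm3 (ζx x - ζz z) ^ 3

/-- The Lagrangian gravitational force `𝓐[κ]^k_i∂_kψ_κ = −𝒢_κ^i − Σ_{κ'≠κ} 𝓘^i_{[κ,κ']}`. -/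
def gravForce (N : ℕ) (α δ : ℝ) (W : Fin N → V3 → ℝ) (ζ : Fin N → ℝ → V3 → V3)
    (κ : Fin N) (τ : ℝ) (x : V3) (i : Fin 3) : ℝ :=
  -(selfG α δ τ (W κ) (ζ κ τ) x i)
  - ∑ κ' ∈ Finset.univ.erase κ, tidalI α δ τ (W κ') (ζ κ τ) (ζ κ' τ) x i

/-- `{(∂_τθ_κ, θ_κ)}` solves the rescaled Lagrangian `N`-body Euler–Poisson system on `[0,T]`. -/
def IsRescaledSolution (N : ℕ) (α β δ : ℝ) (xbar : Fin N → V3) (W : Fin N → V3 → ℝ)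
    (μ : Fin N → V3 → V3) (θ : Fin N → ℝ → V3 → V3) (T : ℝ) : Prop :=
  ∀ κ : Fin N, ∀ τ ∈ Set.Icc (0:ℝ) T, ∀ x ∈ Om, ∀ i : Fin 3,
    (1/δ) * Real.exp (β * τ) * W κ x ^ α *
        (deriv (fun s => deriv (fun s' => θ κ s' x i) s) τ + deriv (fun s => θ κ s x i) τ)
    + (∑ k, pd k (fun y => W κ y ^ (1 + α) *
          Ainv (zeta (xbar κ) (μ κ) (θ κ) τ) y k i *
          Jac (zeta (xbar κ) (μ κ) (θ κ) τ) y ^ (-(1/α))) x)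
    + (1/δ) * Real.exp (β * τ) * W κ x ^ α *
        gravForce N α δ W (fun κ' => zeta (xbar κ') (μ κ') (θ κ')) κ τ x i = 0

/-- The truncated higher order energy function `S^b_κ(τ₁,τ₂)` of a single star. -/
def Sk (α β δ : ℝ) (W χ : V3 → ℝ) (xbar : V3) (μ : V3 → V3) (θ : ℝ → V3 → V3)
    (b : ℕ) (τ₁ τ₂ : ℝ) : ℝ :=
  sSup ((fun τ' =>
      (1/δ) * Real.exp (β * τ') * Xnorm2 α W χ b (tderiv θ τ')
      + Xnorm2 α W χ b (θ τ')
      + Ynorm2 α W χ (zeta xbar μ θ τ') b (gradSq (zeta xbar μ θ τ')) (θ τ')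
      + (1/α) * Ynorm2 α W χ (zeta xbar μ θ τ') b (divSq (zeta xbar μ θ τ')) (θ τ')) ''
    Set.Icc τ₁ τ₂)

/-- The curl energy function `C^b_κ(τ)` of a single star. -/
def Ck (α : ℝ) (W χ : V3 → ℝ) (xbar : V3) (μ : V3 → V3) (θ : ℝ → V3 → V3)
    (b : ℕ) (τ : ℝ) : ℝ :=
  sSup ((fun τ' =>
      Ynorm2 α W χ (zeta xbar μ θ τ') b (curlSq (zeta xbar μ θ τ')) (tderiv θ τ')
      + Ynorm2 α W χ (zeta xbar μ θ τ') b (curlSq (zeta xbar μ θ τ')) (θ τ')) ''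
    Set.Icc 0 τ)

/-- The cumulative (truncated) energy `S_b(τ₁,τ₂) = Σ_κ S^b_κ(τ₁,τ₂)`;
`S_b(τ) = Stot … 0 τ`. -/
def Stot (N : ℕ) (α β δ : ℝ) (W : Fin N → V3 → ℝ) (χ : V3 → ℝ) (xbar : Fin N → V3)
    (μ : Fin N → V3 → V3) (θ : Fin N → ℝ → V3 → V3) (b : ℕ) (τ₁ τ₂ : ℝ) : ℝ :=
  ∑ κ, Sk α β δ (W κ) χ (xbar κ) (μ κ) (θ κ) b τ₁ τ₂

/-- The cumulative curl energy `C_b(τ) = Σ_κ C^b_κ(τ)`. -/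
def Ctot (N : ℕ) (α : ℝ) (W : Fin N → V3 → ℝ) (χ : V3 → ℝ) (xbar : Fin N → V3)
    (μ : Fin N → V3 → V3) (θ : Fin N → ℝ → V3 → V3) (b : ℕ) (τ : ℝ) : ℝ :=
  ∑ κ, Ck α (W κ) χ (xbar κ) (μ κ) (θ κ) b τ

/-- The Strong Separation Condition with constant `L`. -/
def SSC (N : ℕ) (L : ℝ) (xbar : Fin N → V3) (μ : Fin N → V3 → V3) : Prop :=
  ∀ κ κ' : Fin N, κ ≠ κ' → ∀ lam ∈ Set.Icc (0:ℝ) 1, ∀ x ∈ Om, ∀ z ∈ Om,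
    L ≤ enorm3 ((1 - lam) • (μ κ x - μ κ' z) + lam • (xbar κ - xbar κ'))

/-- The a priori assumptions on `[0,T]`. -/
def APriori (N : ℕ) (α β δ ε₁ ε₂ : ℝ) (M : ℕ) (xbar : Fin N → V3)
    (W : Fin N → V3 → ℝ) (χ : V3 → ℝ) (μ : Fin N → V3 → V3)
    (θ : Fin N → ℝ → V3 → V3) (T : ℝ) : Prop :=
  (∀ κ, Xnorm2grad α (W κ) χ M (μ κ) ≤ ε₁) ∧
  SSC N (3 + ε₂) xbar μ ∧
  ∀ τ ∈ Set.Icc (0:ℝ) T,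
    Stot N α β δ W χ xbar μ θ M 0 τ ≤ ε₂ ∧
    (∀ κ, ∀ x ∈ Om, ∀ i j : Fin 3,
        |Ainv (zeta (xbar κ) (μ κ) (θ κ) τ) x i j - (if i = j then (1:ℝ) else 0)| ≤ ε₂) ∧
    (∀ κ, ∀ x ∈ Om, |Jac (zeta (xbar κ) (μ κ) (θ κ) τ) x - 1| ≤ ε₂) ∧
    (∑ κ, sSup ((fun x => enorm3 (θ κ τ x)) '' Om)) ≤ ε₂

/-- The standing hypotheses: admissible adiabatic exponent, relations between the
parameters, admissible data, a solution on `[0,T]`, and the a priori assumptions. -/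
def StandingHyps (N : ℕ) (γ α β δ ε₁ ε₂ : ℝ) (M : ℕ) (xbar : Fin N → V3)
    (W : Fin N → V3 → ℝ) (χ : V3 → ℝ) (μ : Fin N → V3 → V3)
    (θ : Fin N → ℝ → V3 → V3) (T : ℝ) : Prop :=
  2 ≤ N ∧
  ((∃ n : ℕ, 2 ≤ n ∧ γ = 1 + 1/(n:ℝ)) ∨ (1 < γ ∧ γ < 14/13)) ∧
  α = 1/(γ - 1) ∧ β = 3/α ∧
  0 < δ ∧ δ < 1 ∧ 0 < ε₁ ∧ 0 < ε₂ ∧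
  2 * ⌈α⌉₊ + 12 ≤ M ∧
  (∀ κ, AdmissibleProfile (W κ)) ∧ Cutoff χ ∧ 0 ≤ T ∧
  IsRescaledSolution N α β δ xbar W μ θ T ∧
  APriori N α β δ ε₁ ε₂ M xbar W χ μ θ T

theorem test_preamble : True := trivial

section CommutatorProofs

-- differentiability shortcuts
theorem cd_diff {f : V3 → ℝ} (hf : ContDiff ℝ (⊤ : ℕ∞) f) : Differentiable ℝ f :=
  hf.differentiable (by simp)

theorem pd_congr_nhds {f g : V3 → ℝ} {x : V3} (h : f =ᶠ[nhds x] g) (i : Fin 3) :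
    pd i f x = pd i g x := by
  unfold pd; rw [h.fderiv_eq]

theorem pd_sub {f g : V3 → ℝ} {x : V3} (hf : DifferentiableAt ℝ f x)
    (hg : DifferentiableAt ℝ g x) (i : Fin 3) :
    pd i (fun y => f y - g y) x = pd i f x - pd i g x := by
  unfold pd; rw [fderiv_fun_sub hf hg]; rfl

theorem pd_const_mul {f : V3 → ℝ} {x : V3} (hf : DifferentiableAt ℝ f x) (c : ℝ) (i : Fin 3) :
    pd i (fun y => c * f y) x = c * pd i f x := by
  unfold pd; rw [fderiv_const_mul hf]; rfl

theorem pd_mul {f g : V3 → ℝ} {x : V3} (hf : DifferentiableAt ℝ f x)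
    (hg : DifferentiableAt ℝ g x) (i : Fin 3) :
    pd i (fun y => f y * g y) x = f x * pd i g x + g x * pd i f x := by
  unfold pd; rw [fderiv_fun_mul hf hg]; rfl

theorem pd_sum {ι : Type*} {T : Finset ι} {f : ι → V3 → ℝ} {x : V3}
    (hf : ∀ q ∈ T, DifferentiableAt ℝ (f q) x) (i : Fin 3) :
    pd i (fun y => ∑ q ∈ T, f q y) x = ∑ q ∈ T, pd i (f q) x := by
  unfold pd; rw [fderiv_fun_sum hf]; simp

theorem pd_coord (i j : Fin 3) (x : V3) : pd i (fun y => y j) x = if j = i then 1 else 0 := by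
  unfold pd
  have : (fun y : V3 => y j) = fun y => (ContinuousLinearMap.proj (R := ℝ) (φ := fun _ : Fin 3 => ℝ) j) y := rfl
  rw [this, ContinuousLinearMap.fderiv]
  simp [Pi.single_apply]

theorem contDiff_pd {f : V3 → ℝ} (hf : ContDiff ℝ (⊤ : ℕ∞) f) (i : Fin 3) : ContDiff ℝ (⊤ : ℕ∞) (pd i f) := by
  have h1 : ContDiff ℝ (⊤ : ℕ∞) (fun x => fderiv ℝ f x) := hf.fderiv_right (by simp)
  exact h1.clm_apply contDiff_const

theorem pd_comm {f : V3 → ℝ} (hf : ContDiff ℝ (⊤ : ℕ∞) f) (i j : Fin 3) (x : V3) :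
    pd i (pd j f) x = pd j (pd i f) x := by
  have hsymm : IsSymmSndFDerivAt ℝ f x := by
    apply ContDiffAt.isSymmSndFDerivAt (n := ((⊤ : ℕ∞) : WithTop ℕ∞)) _ (by simp only [minSmoothness_of_isRCLikeNormedField]; exact WithTop.coe_le_coe.mpr (le_top : (2 : ℕ∞) ≤ ⊤))
    exact hf.contDiffAt
  have key : ∀ (k : Fin 3) (w : V3), pd k (fun y => fderiv ℝ f y w) x
      = fderiv ℝ (fderiv ℝ f) x (Pi.single k 1) w := by
    intro k w
    unfold pd
    have hd : DifferentiableAt ℝ (fderiv ℝ f) x :=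
      ((hf.fderiv_right (m := (⊤ : ℕ∞)) (by simp)).differentiable (by simp)) x
    rw [fderiv_clm_apply hd (differentiableAt_const w)]
    simp
  have key2 : ∀ (k l : Fin 3), pd k (pd l f) x
      = fderiv ℝ (fderiv ℝ f) x (Pi.single k 1) (Pi.single l 1) := by
    intro k l
    have : pd l f = fun y => fderiv ℝ f y (Pi.single l 1) := rfl
    rw [this, key k (Pi.single l 1)]
  rw [key2, key2]
  exact hsymm _ _

theorem contDiff_coord (j : Fin 3) : ContDiff ℝ (⊤ : ℕ∞) (fun y : V3 => y j) :=
  (ContinuousLinearMap.proj (R := ℝ) (φ := fun _ : Fin 3 => ℝ) j).contDiff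

theorem contDiff_LamOp {f : V3 → ℝ} (hf : ContDiff ℝ (⊤ : ℕ∞) f) : ContDiff ℝ (⊤ : ℕ∞) (LamOp f) := by
  unfold LamOp
  exact ContDiff.sum fun i _ => (contDiff_coord i).mul (contDiff_pd hf i)

theorem contDiff_angOp {f : V3 → ℝ} (hf : ContDiff ℝ (⊤ : ℕ∞) f) (i j : Fin 3) :
    ContDiff ℝ (⊤ : ℕ∞) (angOp i j f) := by
  unfold angOp
  exact ((contDiff_coord i).mul (contDiff_pd hf j)).sub ((contDiff_coord j).mul (contDiff_pd hf i))

-- locality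
theorem LamOp_congr {f g : V3 → ℝ} {x : V3} (h : f =ᶠ[nhds x] g) : LamOp f x = LamOp g x := by
  unfold LamOp
  simp only [pd_congr_nhds h]

theorem angOp_congr {f g : V3 → ℝ} {x : V3} (h : f =ᶠ[nhds x] g) (i j : Fin 3) :
    angOp i j f x = angOp i j g x := by
  unfold angOp
  simp only [pd_congr_nhds h]

-- expansion of pd applied to operators, for smooth f
theorem pd_LamOp' {f : V3 → ℝ} (hf : ContDiff ℝ (⊤ : ℕ∞) f) (s : Fin 3) (x : V3) :
    pd s (LamOp f) x = pd s f x + ∑ k, x k * pd s (pd k f) x := by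
  unfold LamOp
  rw [pd_sum (fun k _ => ((cd_diff (contDiff_coord k)).fun_mul (cd_diff (contDiff_pd hf k))) x) s]
  have : ∀ k : Fin 3, pd s (fun y => y k * pd k f y) x
      = (if k = s then 1 else 0) * pd k f x + x k * pd s (pd k f) x := by
    intro k
    rw [pd_mul (cd_diff (contDiff_coord k) x) (cd_diff (contDiff_pd hf k) x) s, pd_coord]
    ring
  simp only [this]
  rw [Finset.sum_add_distrib]
  congr 1
  simp [Fin.sum_univ_three]

theorem pd_angOp' {f : V3 → ℝ} (hf : ContDiff ℝ (⊤ : ℕ∞) f) (s i j : Fin 3) (x : V3) :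
    pd s (angOp i j f) x = (if i = s then 1 else 0) * pd j f x + x i * pd s (pd j f) x
      - ((if j = s then 1 else 0) * pd i f x + x j * pd s (pd i f) x) := by
  unfold angOp
  rw [pd_sub (((cd_diff (contDiff_coord i)).fun_mul (cd_diff (contDiff_pd hf j))) x)
      (((cd_diff (contDiff_coord j)).fun_mul (cd_diff (contDiff_pd hf i))) x) s,
    pd_mul (cd_diff (contDiff_coord i) x) (cd_diff (contDiff_pd hf j) x) s,
    pd_mul (cd_diff (contDiff_coord j) x) (cd_diff (contDiff_pd hf i) x) s,
    pd_coord, pd_coord]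
  ring

-- commutator identities
theorem pd_LamOp {f : V3 → ℝ} (hf : ContDiff ℝ (⊤ : ℕ∞) f) (s : Fin 3) (x : V3) :
    pd s (LamOp f) x = LamOp (pd s f) x + pd s f x := by
  rw [pd_LamOp' hf s x]
  unfold LamOp
  have : ∀ k : Fin 3, pd s (pd k f) x = pd k (pd s f) x := fun k => pd_comm hf s k x
  simp only [this]
  ring

theorem pd_angOp {f : V3 → ℝ} (hf : ContDiff ℝ (⊤ : ℕ∞) f) (s i j : Fin 3) (x : V3) :
    pd s (angOp i j f) x = angOp i j (pd s f) x
      + (if i = s then 1 else 0) * pd j f x - (if j = s then 1 else 0) * pd i f x := by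
  rw [pd_angOp' hf s i j x]
  unfold angOp
  rw [pd_comm hf s i x, pd_comm hf s j x]
  ring

theorem angOp_LamOp {f : V3 → ℝ} (hf : ContDiff ℝ (⊤ : ℕ∞) f) (i j : Fin 3) (x : V3) :
    angOp i j (LamOp f) x = LamOp (angOp i j f) x := by
  show x i * pd j (LamOp f) x - x j * pd i (LamOp f) x = ∑ k, x k * pd k (angOp i j f) x
  rw [pd_LamOp' hf i x, pd_LamOp' hf j x]
  have e : ∀ k : Fin 3, x k * pd k (angOp i j f) x
      = ((if i = k then x k * pd j f x else 0) + x i * (x k * pd k (pd j f) x))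
        - ((if j = k then x k * pd i f x else 0) + x j * (x k * pd k (pd i f) x)) := by
    intro k; rw [pd_angOp' hf k i j x]; split_ifs <;> ring
  rw [Finset.sum_congr rfl (fun k _ => e k), Finset.sum_sub_distrib,
    Finset.sum_add_distrib, Finset.sum_add_distrib, ← Finset.mul_sum, ← Finset.mul_sum,
    Finset.sum_ite_eq, Finset.sum_ite_eq]
  simp only [Finset.mem_univ, if_true]
  rw [show (∑ k, x k * pd j (pd k f) x) = ∑ k, x k * pd k (pd j f) x from
      Finset.sum_congr rfl fun k _ => by rw [pd_comm hf j k x],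
    show (∑ k, x k * pd i (pd k f) x) = ∑ k, x k * pd k (pd i f) x from
      Finset.sum_congr rfl fun k _ => by rw [pd_comm hf i k x]]
  ring

-- the three angular commutators
theorem A2_A1 {f : V3 → ℝ} (hf : ContDiff ℝ (⊤ : ℕ∞) f) (x : V3) :
    angOp 0 2 (angOp 0 1 f) x = angOp 0 1 (angOp 0 2 f) x + angOp 1 2 f x := by
  have h2 : ∀ k l : Fin 3, pd k (pd l f) x = pd l (pd k f) x := fun k l => pd_comm hf k l x
  show x 0 * pd 2 (angOp 0 1 f) x - x 2 * pd 0 (angOp 0 1 f) x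
    = (x 0 * pd 1 (angOp 0 2 f) x - x 1 * pd 0 (angOp 0 2 f) x) + angOp 1 2 f x
  rw [pd_angOp' hf 2 0 1 x, pd_angOp' hf 0 0 1 x, pd_angOp' hf 1 0 2 x, pd_angOp' hf 0 0 2 x]
  show _ = _ + (x 1 * pd 2 f x - x 2 * pd 1 f x)
  simp only [show ((0:Fin 3) = 2) = False from by simp, show ((1:Fin 3) = 2) = False from by simp,
    show ((0:Fin 3) = 1) = False from by simp, show ((2:Fin 3) = 1) = False from by simp,
    show ((2:Fin 3) = 0) = False from by simp, show ((1:Fin 3) = 0) = False from by simp,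
    if_false, if_true, ite_self]
  norm_num
  rw [h2 1 0, h2 2 0, h2 2 1]
  ring

theorem A3_A1 {f : V3 → ℝ} (hf : ContDiff ℝ (⊤ : ℕ∞) f) (x : V3) :
    angOp 1 2 (angOp 0 1 f) x = angOp 0 1 (angOp 1 2 f) x - angOp 0 2 f x := by
  have h2 : ∀ k l : Fin 3, pd k (pd l f) x = pd l (pd k f) x := fun k l => pd_comm hf k l x
  show x 1 * pd 2 (angOp 0 1 f) x - x 2 * pd 1 (angOp 0 1 f) x
    = (x 0 * pd 1 (angOp 1 2 f) x - x 1 * pd 0 (angOp 1 2 f) x) - angOp 0 2 f x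
  rw [pd_angOp' hf 2 0 1 x, pd_angOp' hf 1 0 1 x, pd_angOp' hf 1 1 2 x, pd_angOp' hf 0 1 2 x]
  show _ = _ - (x 0 * pd 2 f x - x 2 * pd 0 f x)
  simp only [show ((0:Fin 3) = 2) = False from by simp, show ((1:Fin 3) = 2) = False from by simp,
    show ((0:Fin 3) = 1) = False from by simp, show ((2:Fin 3) = 1) = False from by simp,
    show ((2:Fin 3) = 0) = False from by simp, show ((1:Fin 3) = 0) = False from by simp,
    if_false, if_true, ite_self]
  norm_num
  rw [h2 1 0, h2 2 0, h2 2 1]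
  ring

theorem A3_A2 {f : V3 → ℝ} (hf : ContDiff ℝ (⊤ : ℕ∞) f) (x : V3) :
    angOp 1 2 (angOp 0 2 f) x = angOp 0 2 (angOp 1 2 f) x + angOp 0 1 f x := by
  have h2 : ∀ k l : Fin 3, pd k (pd l f) x = pd l (pd k f) x := fun k l => pd_comm hf k l x
  show x 1 * pd 2 (angOp 0 2 f) x - x 2 * pd 1 (angOp 0 2 f) x
    = (x 0 * pd 2 (angOp 1 2 f) x - x 2 * pd 0 (angOp 1 2 f) x) + angOp 0 1 f x
  rw [pd_angOp' hf 2 0 2 x, pd_angOp' hf 1 0 2 x, pd_angOp' hf 2 1 2 x, pd_angOp' hf 0 1 2 x]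
  show _ = _ + (x 0 * pd 1 f x - x 1 * pd 0 f x)
  simp only [show ((0:Fin 3) = 2) = False from by simp, show ((1:Fin 3) = 2) = False from by simp,
    show ((0:Fin 3) = 1) = False from by simp, show ((2:Fin 3) = 1) = False from by simp,
    show ((2:Fin 3) = 0) = False from by simp, show ((1:Fin 3) = 0) = False from by simp,
    if_false, if_true, ite_self]
  norm_num
  rw [h2 1 0, h2 2 0, h2 2 1]
  ring

/-! ### Ndell layer -/

theorem contDiff_iter {op : (V3 → ℝ) → V3 → ℝ}
    (hop : ∀ g, ContDiff ℝ (⊤ : ℕ∞) g → ContDiff ℝ (⊤ : ℕ∞) (op g)) :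
    ∀ (n : ℕ) {f : V3 → ℝ}, ContDiff ℝ (⊤ : ℕ∞) f → ContDiff ℝ (⊤ : ℕ∞) (op^[n] f) := by
  intro n
  induction n with
  | zero => intro f hf; simpa using hf
  | succ n ih =>
    intro f hf
    rw [Function.iterate_succ_apply']
    exact hop _ (ih hf)

theorem contDiff_Ndell {f : V3 → ℝ} (hf : ContDiff ℝ (⊤ : ℕ∞) f) (m n1 n2 n3 : ℕ) :
    ContDiff ℝ (⊤ : ℕ∞) (Ndell m n1 n2 n3 f) := by
  have h3 := contDiff_iter (fun g hg => contDiff_angOp hg 1 2) n3 hf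
  have h2 := contDiff_iter (fun g hg => contDiff_angOp hg 0 2) n2 h3
  have h1 := contDiff_iter (fun g hg => contDiff_angOp hg 0 1) n1 h2
  exact contDiff_iter (fun g hg => contDiff_LamOp hg) m h1

theorem Ndell_succ_m (m n1 n2 n3 : ℕ) (f : V3 → ℝ) :
    Ndell (m+1) n1 n2 n3 f = LamOp (Ndell m n1 n2 n3 f) := by
  show LamOp^[m+1] ((angOp 0 1)^[n1] ((angOp 0 2)^[n2] ((angOp 1 2)^[n3] f))) = _
  rw [Function.iterate_succ_apply']
  rfl

theorem Ndell_succ_n1 (n1 n2 n3 : ℕ) (f : V3 → ℝ) :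
    Ndell 0 (n1+1) n2 n3 f = angOp 0 1 (Ndell 0 n1 n2 n3 f) := by
  show (angOp 0 1)^[n1+1] ((angOp 0 2)^[n2] ((angOp 1 2)^[n3] f)) = _
  rw [Function.iterate_succ_apply']
  rfl

theorem Ndell_succ_n2 (n2 n3 : ℕ) (f : V3 → ℝ) :
    Ndell 0 0 (n2+1) n3 f = angOp 0 2 (Ndell 0 0 n2 n3 f) := by
  show (angOp 0 2)^[n2+1] ((angOp 1 2)^[n3] f) = _
  rw [Function.iterate_succ_apply']
  rfl

theorem Ndell_succ_n3 (n3 : ℕ) (f : V3 → ℝ) :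
    Ndell 0 0 0 (n3+1) f = angOp 1 2 (Ndell 0 0 0 n3 f) := by
  show (angOp 1 2)^[n3+1] f = _
  rw [Function.iterate_succ_apply']
  rfl

theorem Ndell_zero (f : V3 → ℝ) : Ndell 0 0 0 0 f = f := rfl

theorem Ndell_eq_iter (m n1 n2 n3 : ℕ) (f : V3 → ℝ) :
    Ndell m n1 n2 n3 f = LamOp^[m] (Ndell 0 n1 n2 n3 f) := rfl

theorem angOp_iterLam {f : V3 → ℝ} (hf : ContDiff ℝ (⊤ : ℕ∞) f) (i j : Fin 3) (m : ℕ) :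
    angOp i j (LamOp^[m] f) = LamOp^[m] (angOp i j f) := by
  induction m with
  | zero => rfl
  | succ m ih =>
    rw [Function.iterate_succ_apply', Function.iterate_succ_apply', ← ih]
    exact funext fun x => angOp_LamOp (contDiff_iter (fun g hg => contDiff_LamOp hg) m hf) i j x

/-! ### linearity of the operators -/

theorem LamOp_sum {ι : Type*} {T : Finset ι} {g : ι → V3 → ℝ} {x : V3}
    (h : ∀ q ∈ T, DifferentiableAt ℝ (g q) x) :
    LamOp (fun y => ∑ q ∈ T, g q y) x = ∑ q ∈ T, LamOp (g q) x := by
  unfold LamOp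
  simp only [pd_sum h]
  simp only [Finset.mul_sum]
  rw [Finset.sum_comm]

theorem LamOp_mul {f g : V3 → ℝ} {x : V3} (hf : DifferentiableAt ℝ f x)
    (hg : DifferentiableAt ℝ g x) :
    LamOp (fun y => f y * g y) x = f x * LamOp g x + g x * LamOp f x := by
  unfold LamOp
  simp only [pd_mul hf hg]
  simp only [Finset.mul_sum]
  rw [← Finset.sum_add_distrib]
  exact Finset.sum_congr rfl fun i _ => by ring

theorem LamOp_sub {f g : V3 → ℝ} {x : V3} (hf : DifferentiableAt ℝ f x)
    (hg : DifferentiableAt ℝ g x) :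
    LamOp (fun y => f y - g y) x = LamOp f x - LamOp g x := by
  unfold LamOp
  simp only [pd_sub hf hg]
  rw [← Finset.sum_sub_distrib]
  exact Finset.sum_congr rfl fun i _ => by ring

theorem LamOp_cmul {f : V3 → ℝ} {x : V3} (hf : DifferentiableAt ℝ f x) (c : ℝ) :
    LamOp (fun y => c * f y) x = c * LamOp f x := by
  unfold LamOp
  simp only [pd_const_mul hf]
  rw [Finset.mul_sum]
  exact Finset.sum_congr rfl fun i _ => by ring

theorem angOp_sum {ι : Type*} {T : Finset ι} {g : ι → V3 → ℝ} {x : V3} (i j : Fin 3)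
    (h : ∀ q ∈ T, DifferentiableAt ℝ (g q) x) :
    angOp i j (fun y => ∑ q ∈ T, g q y) x = ∑ q ∈ T, angOp i j (g q) x := by
  unfold angOp
  simp only [pd_sum h]
  simp only [Finset.mul_sum]
  rw [← Finset.sum_sub_distrib]

theorem angOp_mul {f g : V3 → ℝ} {x : V3} (i j : Fin 3) (hf : DifferentiableAt ℝ f x)
    (hg : DifferentiableAt ℝ g x) :
    angOp i j (fun y => f y * g y) x = f x * angOp i j g x + g x * angOp i j f x := by
  unfold angOp
  simp only [pd_mul hf hg]
  ring

theorem angOp_sub {f g : V3 → ℝ} {x : V3} (i j : Fin 3) (hf : DifferentiableAt ℝ f x)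
    (hg : DifferentiableAt ℝ g x) :
    angOp i j (fun y => f y - g y) x = angOp i j f x - angOp i j g x := by
  unfold angOp
  simp only [pd_sub hf hg]
  ring

theorem angOp_cmul {f : V3 → ℝ} {x : V3} (i j : Fin 3) (hf : DifferentiableAt ℝ f x) (c : ℝ) :
    angOp i j (fun y => c * f y) x = c * angOp i j f x := by
  unfold angOp
  simp only [pd_const_mul hf]
  ring

theorem LamOp_combo {ι : Type*} {T : Finset ι} {g : ι → V3 → ℝ} {x : V3} (c : ι → ℝ)
    (h : ∀ q ∈ T, ContDiff ℝ (⊤ : ℕ∞) (g q)) :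
    LamOp (fun y => ∑ q ∈ T, c q * g q y) x = ∑ q ∈ T, c q * LamOp (g q) x := by
  rw [LamOp_sum (fun q hq => ((cd_diff (h q hq)).const_mul (c q)).differentiableAt)]
  exact Finset.sum_congr rfl fun q hq => LamOp_cmul (cd_diff (h q hq) x) (c q)

theorem angOp_combo {ι : Type*} {T : Finset ι} {g : ι → V3 → ℝ} {x : V3} (i j : Fin 3) (c : ι → ℝ)
    (h : ∀ q ∈ T, ContDiff ℝ (⊤ : ℕ∞) (g q)) :
    angOp i j (fun y => ∑ q ∈ T, c q * g q y) x = ∑ q ∈ T, c q * angOp i j (g q) x := by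
  rw [angOp_sum i j (fun q hq => ((cd_diff (h q hq)).const_mul (c q)).differentiableAt)]
  exact Finset.sum_congr rfl fun q hq => angOp_cmul i j (cd_diff (h q hq) x) (c q)

theorem iterLam_combo {ι : Type*} {T : Finset ι} {g : ι → V3 → ℝ} (c : ι → ℝ)
    (h : ∀ q ∈ T, ContDiff ℝ (⊤ : ℕ∞) (g q)) :
    ∀ m : ℕ, LamOp^[m] (fun y => ∑ q ∈ T, c q * g q y)
      = fun x => ∑ q ∈ T, c q * LamOp^[m] (g q) x := by
  intro m
  induction m with
  | zero => simp
  | succ m ih =>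
    rw [Function.iterate_succ_apply', ih]
    funext x
    rw [LamOp_combo c (fun q hq => contDiff_iter (fun g hg => contDiff_LamOp hg) m (h q hq))]
    exact Finset.sum_congr rfl fun q hq => by rw [Function.iterate_succ_apply']

/-! ### angular normal ordering -/

def NW (b : ℕ×ℕ×ℕ) : (V3 → ℝ) → V3 → ℝ := fun f => Ndell 0 b.1 b.2.1 b.2.2 f
def ang3 (b : ℕ×ℕ×ℕ) : ℕ := b.1 + b.2.1 + b.2.2

theorem contDiff_NW {f : V3 → ℝ} (hf : ContDiff ℝ (⊤ : ℕ∞) f) (b : ℕ×ℕ×ℕ) : ContDiff ℝ (⊤ : ℕ∞) (NW b f) :=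
  contDiff_Ndell hf 0 b.1 b.2.1 b.2.2

def AExp (k : ℕ) (h : (V3 → ℝ) → V3 → ℝ) : Prop :=
  ∃ T : Finset (ℕ×ℕ×ℕ), ∃ c : (ℕ×ℕ×ℕ) → ℝ, (∀ b ∈ T, 1 ≤ ang3 b ∧ ang3 b ≤ k) ∧
    ∀ f, ContDiff ℝ (⊤ : ℕ∞) f → ∀ x, h f x = ∑ b ∈ T, c b * NW b f x

theorem sum_union_ite {ι M : Type*} [DecidableEq ι] [AddCommMonoid M] (T₁ T₂ : Finset ι)
    (f₁ f₂ : ι → M) :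
    ∑ b ∈ T₁ ∪ T₂, ((if b ∈ T₁ then f₁ b else 0) + (if b ∈ T₂ then f₂ b else 0))
      = (∑ b ∈ T₁, f₁ b) + ∑ b ∈ T₂, f₂ b := by
  rw [Finset.sum_add_distrib, Finset.sum_ite_mem, Finset.sum_ite_mem,
    Finset.union_inter_cancel_left, Finset.union_inter_cancel_right]

theorem AExp_congr {k : ℕ} {h₁ h₂ : (V3 → ℝ) → V3 → ℝ}
    (he : ∀ f, ContDiff ℝ (⊤ : ℕ∞) f → ∀ x, h₁ f x = h₂ f x) (h : AExp k h₁) : AExp k h₂ := by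
  obtain ⟨T, c, hb, heq⟩ := h
  exact ⟨T, c, hb, fun f hf x => (he f hf x) ▸ heq f hf x⟩

theorem AExp_mono {k k' : ℕ} (hk : k ≤ k') {h : (V3 → ℝ) → V3 → ℝ} (h1 : AExp k h) :
    AExp k' h := by
  obtain ⟨T, c, hb, heq⟩ := h1
  exact ⟨T, c, fun b hbT => ⟨(hb b hbT).1, le_trans (hb b hbT).2 hk⟩, heq⟩

theorem AExp_single {k : ℕ} {b : ℕ×ℕ×ℕ} (h1 : 1 ≤ ang3 b) (h2 : ang3 b ≤ k) :
    AExp k (fun f x => NW b f x) := by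
  refine ⟨{b}, fun _ => 1, ?_, ?_⟩
  · intro b' hb'; rw [Finset.mem_singleton] at hb'; subst hb'; exact ⟨h1, h2⟩
  · intro f hf x; simp

theorem AExp_zero {k : ℕ} : AExp k (fun _ _ => 0) :=
  ⟨∅, fun _ => 0, by simp, by simp⟩

theorem AExp_add {k : ℕ} {h₁ h₂ : (V3 → ℝ) → V3 → ℝ} (ha : AExp k h₁) (hb : AExp k h₂) :
    AExp k (fun f x => h₁ f x + h₂ f x) := by
  obtain ⟨T₁, c₁, hB₁, he₁⟩ := ha
  obtain ⟨T₂, c₂, hB₂, he₂⟩ := hb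
  refine ⟨T₁ ∪ T₂, fun b => (if b ∈ T₁ then c₁ b else 0) + (if b ∈ T₂ then c₂ b else 0), ?_, ?_⟩
  · intro b hbm
    rcases Finset.mem_union.mp hbm with h | h
    · exact hB₁ b h
    · exact hB₂ b h
  · intro f hf x
    show h₁ f x + h₂ f x = _
    rw [he₁ f hf x, he₂ f hf x, ← sum_union_ite T₁ T₂ (fun b => c₁ b * NW b f x)
      (fun b => c₂ b * NW b f x)]
    exact Finset.sum_congr rfl fun b _ => by rw [add_mul, ite_mul, ite_mul]; simp

theorem AExp_cmul {k : ℕ} {h : (V3 → ℝ) → V3 → ℝ} (a : ℝ) (hh : AExp k h) :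
    AExp k (fun f x => a * h f x) := by
  obtain ⟨T, c, hB, he⟩ := hh
  refine ⟨T, fun b => a * c b, hB, ?_⟩
  intro f hf x
  show a * h f x = _
  rw [he f hf x, Finset.mul_sum]
  exact Finset.sum_congr rfl fun b _ => by ring

theorem AExp_finsum {k : ℕ} {ι : Type*} {T : Finset ι} {h : ι → (V3 → ℝ) → V3 → ℝ}
    (hh : ∀ i ∈ T, AExp k (h i)) : AExp k (fun f x => ∑ i ∈ T, h i f x) := by
  classical
  induction T using Finset.cons_induction with
  | empty => exact AExp_congr (fun f hf x => by simp) AExp_zero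
  | cons a T ha ih =>
    have h1 : AExp k (fun f x => h a f x + ∑ i ∈ T, h i f x) :=
      AExp_add (hh a (Finset.mem_cons_self a T)) (ih fun i hi => hh i (Finset.mem_cons.mpr (Or.inr hi)))
    exact AExp_congr (fun f hf x => by rw [Finset.sum_cons]) h1

theorem AExp_combo {k : ℕ} {ι : Type*} {T : Finset ι} {h : ι → (V3 → ℝ) → V3 → ℝ} (d : ι → ℝ)
    (hh : ∀ i ∈ T, AExp k (h i)) : AExp k (fun f x => ∑ i ∈ T, d i * h i f x) :=
  AExp_finsum fun i hi => AExp_cmul (d i) (hh i hi)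

theorem AExp_compAng {k k' : ℕ} {h : (V3 → ℝ) → V3 → ℝ} (i j : Fin 3) (hh : AExp k h)
    (hexp : ∀ b, 1 ≤ ang3 b → ang3 b ≤ k → AExp k' (fun f x => angOp i j (NW b f) x)) :
    AExp k' (fun f x => angOp i j (h f) x) := by
  obtain ⟨T, c, hB, he⟩ := hh
  have key : ∀ f, ContDiff ℝ (⊤ : ℕ∞) f → ∀ x,
      (∑ b ∈ T, c b * angOp i j (NW b f) x) = angOp i j (h f) x := by
    intro f hf x
    rw [show h f = fun y => ∑ b ∈ T, c b * NW b f y from funext (he f hf)]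
    exact (angOp_combo i j c (fun b _ => contDiff_NW hf b)).symm
  exact AExp_congr key (AExp_combo c (fun b hb => hexp b (hB b hb).1 (hB b hb).2))

theorem A1_Ndell {f : V3 → ℝ} (hf : ContDiff ℝ (⊤ : ℕ∞) f) (m n1 n2 n3 : ℕ) :
    angOp 0 1 (Ndell m n1 n2 n3 f) = Ndell m (n1+1) n2 n3 f := by
  rw [Ndell_eq_iter m n1 n2 n3 f,
    angOp_iterLam (contDiff_Ndell hf 0 n1 n2 n3) 0 1 m, ← Ndell_succ_n1]
  rfl

theorem A2_Ndell0 {f : V3 → ℝ} (hf : ContDiff ℝ (⊤ : ℕ∞) f) (m n2 n3 : ℕ) :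
    angOp 0 2 (Ndell m 0 n2 n3 f) = Ndell m 0 (n2+1) n3 f := by
  rw [Ndell_eq_iter m 0 n2 n3 f,
    angOp_iterLam (contDiff_Ndell hf 0 0 n2 n3) 0 2 m, show Ndell 0 0 n2 n3 f = Ndell 0 0 n2 n3 f from rfl]
  rw [show angOp 0 2 (Ndell 0 0 n2 n3 f) = Ndell 0 0 (n2+1) n3 f from (Ndell_succ_n2 n2 n3 f).symm]
  rfl

theorem A3_Ndell0 {f : V3 → ℝ} (hf : ContDiff ℝ (⊤ : ℕ∞) f) (m n3 : ℕ) :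
    angOp 1 2 (Ndell m 0 0 n3 f) = Ndell m 0 0 (n3+1) f := by
  rw [Ndell_eq_iter m 0 0 n3 f,
    angOp_iterLam (contDiff_Ndell hf 0 0 0 n3) 1 2 m]
  rw [show angOp 1 2 (Ndell 0 0 0 n3 f) = Ndell 0 0 0 (n3+1) f from (Ndell_succ_n3 n3 f).symm]
  rfl

theorem lemN : ∀ k : ℕ,
    (∀ b : ℕ×ℕ×ℕ, ang3 b ≤ k → AExp (ang3 b + 1) (fun f x => angOp 0 2 (NW b f) x))
    ∧ (∀ b : ℕ×ℕ×ℕ, ang3 b ≤ k → AExp (ang3 b + 1) (fun f x => angOp 1 2 (NW b f) x)) := by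
  intro k
  induction k with
  | zero =>
    constructor
    · rintro ⟨b1, b2, b3⟩ hb
      have h1 : b1 = 0 ∧ b2 = 0 ∧ b3 = 0 := by simp only [ang3] at hb; omega
      obtain ⟨rfl, rfl, rfl⟩ := h1
      refine AExp_congr ?_ (AExp_single (b := (0,1,0)) (by decide) (by decide))
      intro f hf x
      show NW (0,1,0) f x = _
      unfold NW
      rw [show Ndell 0 0 1 0 f = angOp 0 2 (Ndell 0 0 0 0 f) from Ndell_succ_n2 0 0 f]
    · rintro ⟨b1, b2, b3⟩ hb
      have h1 : b1 = 0 ∧ b2 = 0 ∧ b3 = 0 := by simp only [ang3] at hb; omega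
      obtain ⟨rfl, rfl, rfl⟩ := h1
      refine AExp_congr ?_ (AExp_single (b := (0,0,1)) (by decide) (by decide))
      intro f hf x
      show NW (0,0,1) f x = _
      unfold NW
      rw [show Ndell 0 0 0 1 f = angOp 1 2 (Ndell 0 0 0 0 f) from Ndell_succ_n3 0 f]
  | succ k ih =>
    have hA1single : ∀ (kk : ℕ) (b : ℕ×ℕ×ℕ), ang3 b + 1 ≤ kk →
        AExp kk (fun f x => angOp 0 1 (NW b f) x) := by
      intro kk b h2
      refine AExp_congr ?_ (AExp_single (b := (b.1+1, b.2.1, b.2.2))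
        (by simp only [ang3] at *; omega) (by simp only [ang3] at *; omega))
      intro f hf x
      show NW (b.1+1, b.2.1, b.2.2) f x = _
      unfold NW
      rw [← A1_Ndell hf 0 b.1 b.2.1 b.2.2]
    have h02 : ∀ b : ℕ×ℕ×ℕ, ang3 b ≤ k + 1 → AExp (ang3 b + 1) (fun f x => angOp 0 2 (NW b f) x) := by
      rintro ⟨b1, b2, b3⟩ hb
      match b1 with
      | 0 =>
        refine AExp_congr ?_ (AExp_single (b := (0, b2+1, b3)) (by simp only [ang3]; omega)
          (by simp only [ang3]; omega))
        intro f hf x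
        show NW (0, b2+1, b3) f x = _
        unfold NW
        rw [← A2_Ndell0 hf 0 b2 b3]
      | a + 1 =>
        have hang : ang3 (a, b2, b3) ≤ k := by simp only [ang3] at hb ⊢; omega
        -- angOp 0 2 (A1 G) = A1 (A2 G) + A3 G
        have piece1 : AExp (ang3 (a+1,b2,b3) + 1)
            (fun f x => angOp 0 1 (angOp 0 2 (NW (a,b2,b3) f)) x) := by
          refine AExp_compAng 0 1 (ih.1 (a,b2,b3) hang) ?_
          intro b hb1 hb2
          exact hA1single _ b (by simp only [ang3] at *; omega)
        have piece2 : AExp (ang3 (a+1,b2,b3) + 1)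
            (fun f x => angOp 1 2 (NW (a,b2,b3) f) x) :=
          AExp_mono (by simp only [ang3]; omega) (ih.2 (a,b2,b3) hang)
        refine AExp_congr ?_ (AExp_add piece1 piece2)
        intro f hf x
        have hG : ContDiff ℝ (⊤ : ℕ∞) (NW (a,b2,b3) f) := contDiff_NW hf _
        have : NW (a+1,b2,b3) f = angOp 0 1 (NW (a,b2,b3) f) := by
          unfold NW; exact Ndell_succ_n1 a b2 b3 f
        rw [this]
        exact (A2_A1 hG x).symm
    have h12 : ∀ b : ℕ×ℕ×ℕ, ang3 b ≤ k + 1 → AExp (ang3 b + 1) (fun f x => angOp 1 2 (NW b f) x) := by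
      rintro ⟨b1, b2, b3⟩ hb
      match b1, b2 with
      | 0, 0 =>
        refine AExp_congr ?_ (AExp_single (b := (0, 0, b3+1)) (by simp only [ang3]; omega)
          (by simp only [ang3]; omega))
        intro f hf x
        show NW (0, 0, b3+1) f x = _
        unfold NW
        rw [← A3_Ndell0 hf 0 b3]
      | 0, e + 1 =>
        have hang : ang3 (0, e, b3) ≤ k := by simp only [ang3] at hb ⊢; omega
        have piece1 : AExp (ang3 (0,e+1,b3) + 1)
            (fun f x => angOp 0 2 (angOp 1 2 (NW (0,e,b3) f)) x) := by
          refine AExp_compAng 0 2 (ih.2 (0,e,b3) hang) ?_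
          intro b hb1 hb2
          exact AExp_mono (by simp only [ang3] at *; omega) (h02 b (by simp only [ang3] at *; omega))
        have piece2 : AExp (ang3 (0,e+1,b3) + 1)
            (fun f x => angOp 0 1 (NW (0,e,b3) f) x) :=
          hA1single _ (0,e,b3) (by simp only [ang3]; omega)
        refine AExp_congr ?_ (AExp_add piece1 piece2)
        intro f hf x
        have hG : ContDiff ℝ (⊤ : ℕ∞) (NW (0,e,b3) f) := contDiff_NW hf _
        have : NW (0,e+1,b3) f = angOp 0 2 (NW (0,e,b3) f) := by
          unfold NW; exact Ndell_succ_n2 e b3 f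
        rw [this]
        exact (A3_A2 hG x).symm
      | a + 1, b2 =>
        have hang : ang3 (a, b2, b3) ≤ k := by simp only [ang3] at hb ⊢; omega
        have piece1 : AExp (ang3 (a+1,b2,b3) + 1)
            (fun f x => angOp 0 1 (angOp 1 2 (NW (a,b2,b3) f)) x) := by
          refine AExp_compAng 0 1 (ih.2 (a,b2,b3) hang) ?_
          intro b hb1 hb2
          exact hA1single _ b (by simp only [ang3] at *; omega)
        have piece2 : AExp (ang3 (a+1,b2,b3) + 1)
            (fun f x => (-1 : ℝ) * angOp 0 2 (NW (a,b2,b3) f) x) :=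
          AExp_cmul (-1) (AExp_mono (by simp only [ang3]; omega) (ih.1 (a,b2,b3) hang))
        refine AExp_congr ?_ (AExp_add piece1 piece2)
        intro f hf x
        have hG : ContDiff ℝ (⊤ : ℕ∞) (NW (a,b2,b3) f) := contDiff_NW hf _
        have : NW (a+1,b2,b3) f = angOp 0 1 (NW (a,b2,b3) f) := by
          unfold NW; exact Ndell_succ_n1 a b2 b3 f
        rw [this]
        rw [show (-1 : ℝ) * angOp 0 2 (NW (a,b2,b3) f) x = -(angOp 0 2 (NW (a,b2,b3) f) x) by ring]
        rw [← sub_eq_add_neg]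
        exact (A3_A1 hG x).symm
    exact ⟨h02, h12⟩

/-! ### full-index normal ordering -/

def NP (q : ℕ×ℕ×ℕ×ℕ) : (V3 → ℝ) → V3 → ℝ := fun f => Ndell q.1 q.2.1 q.2.2.1 q.2.2.2 f
def totI (q : ℕ×ℕ×ℕ×ℕ) : ℕ := q.1 + q.2.1 + q.2.2.1 + q.2.2.2
def angI (q : ℕ×ℕ×ℕ×ℕ) : ℕ := q.2.1 + q.2.2.1 + q.2.2.2

theorem contDiff_NP {f : V3 → ℝ} (hf : ContDiff ℝ (⊤ : ℕ∞) f) (q : ℕ×ℕ×ℕ×ℕ) : ContDiff ℝ (⊤ : ℕ∞) (NP q f) :=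
  contDiff_Ndell hf q.1 q.2.1 q.2.2.1 q.2.2.2

theorem Lam_NP (q : ℕ×ℕ×ℕ×ℕ) (f : V3 → ℝ) : LamOp (NP q f) = NP (q.1+1, q.2) f :=
  (Ndell_succ_m q.1 q.2.1 q.2.2.1 q.2.2.2 f).symm

theorem A1_NP {f : V3 → ℝ} (hf : ContDiff ℝ (⊤ : ℕ∞) f) (q : ℕ×ℕ×ℕ×ℕ) :
    angOp 0 1 (NP q f) = NP (q.1, q.2.1+1, q.2.2) f :=
  A1_Ndell hf q.1 q.2.1 q.2.2.1 q.2.2.2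

theorem NP_eq_iter_NW (q : ℕ×ℕ×ℕ×ℕ) (f : V3 → ℝ) :
    NP q f = LamOp^[q.1] (NW (q.2.1, q.2.2.1, q.2.2.2) f) := rfl

/-- Expansion of an angular derivative applied to `NP q`. -/
theorem NExp (i j : Fin 3) (hij : (i = 0 ∧ j = 2) ∨ (i = 1 ∧ j = 2)) (q : ℕ×ℕ×ℕ×ℕ) :
    ∃ T : Finset (ℕ×ℕ×ℕ×ℕ), ∃ c : (ℕ×ℕ×ℕ×ℕ) → ℝ,
      (∀ r ∈ T, r.1 = q.1 ∧ 1 ≤ angI r ∧ angI r ≤ angI q + 1) ∧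
      ∀ F, ContDiff ℝ (⊤ : ℕ∞) F → ∀ x, angOp i j (NP q F) x = ∑ r ∈ T, c r * NP r F x := by
  set b : ℕ×ℕ×ℕ := (q.2.1, q.2.2.1, q.2.2.2) with hbdef
  have hexp : AExp (ang3 b + 1) (fun f x => angOp i j (NW b f) x) := by
    rcases hij with ⟨rfl, rfl⟩ | ⟨rfl, rfl⟩
    · exact (lemN (ang3 b)).1 b le_rfl
    · exact (lemN (ang3 b)).2 b le_rfl
  obtain ⟨T', c', hB', he'⟩ := hexp
  refine ⟨T'.image (fun r => (q.1, r.1, r.2.1, r.2.2)), fun r => c' (r.2.1, r.2.2.1, r.2.2.2),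
    ?_, ?_⟩
  · intro r hr
    obtain ⟨r', hr', rfl⟩ := Finset.mem_image.mp hr
    have := hB' r' hr'
    simp only [hbdef] at this
    refine ⟨rfl, ?_, ?_⟩ <;> simp only [angI, ang3] at * <;> omega
  · intro F hF x
    have h1 : angOp i j (NP q F) x = LamOp^[q.1] (angOp i j (NW b F)) x := by
      rw [NP_eq_iter_NW, angOp_iterLam (contDiff_NW hF b) i j q.1]
    have h2 : angOp i j (NW b F) = fun y => ∑ r ∈ T', c' r * NW r F y :=
      funext (he' F hF)
    rw [h1, h2, iterLam_combo c' (fun r _ => contDiff_NW hF r) q.1]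
    rw [Finset.sum_image (by intro a _ a' _ h; simpa [Prod.ext_iff] using h)]
    refine Finset.sum_congr rfl fun r hr => ?_
    congr 1

/-! ### RepC: expansions with coefficients smooth away from the origin -/

def U0 : Set V3 := {x : V3 | x ≠ 0}

theorem isOpen_U0 : IsOpen U0 := by
  have : U0 = {(0 : V3)}ᶜ := by ext x; simp [U0]
  rw [this]
  exact isClosed_singleton.isOpen_compl

def RepC (B : ℕ×ℕ×ℕ×ℕ → Prop) (h : (V3 → ℝ) → V3 → ℝ) : Prop :=
  ∃ T : Finset (ℕ×ℕ×ℕ×ℕ), ∃ c : (ℕ×ℕ×ℕ×ℕ) → V3 → ℝ,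
    (∀ q, ContDiffOn ℝ (⊤ : ℕ∞) (c q) U0) ∧ (∀ q ∈ T, B q) ∧
    ∀ F, ContDiff ℝ (⊤ : ℕ∞) F → ∀ x : V3, x ≠ 0 → h F x = ∑ q ∈ T, c q x * NP q F x

theorem RepC_congr {B : ℕ×ℕ×ℕ×ℕ → Prop} {h₁ h₂ : (V3 → ℝ) → V3 → ℝ}
    (he : ∀ F, ContDiff ℝ (⊤ : ℕ∞) F → ∀ x : V3, x ≠ 0 → h₁ F x = h₂ F x) (h : RepC B h₁) :
    RepC B h₂ := by
  obtain ⟨T, c, hc, hB, heq⟩ := h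
  exact ⟨T, c, hc, hB, fun F hF x hx => (he F hF x hx) ▸ heq F hF x hx⟩

theorem RepC_mono {B B' : ℕ×ℕ×ℕ×ℕ → Prop} (hBB : ∀ q, B q → B' q) {h : (V3 → ℝ) → V3 → ℝ}
    (h1 : RepC B h) : RepC B' h := by
  obtain ⟨T, c, hc, hB, heq⟩ := h1
  exact ⟨T, c, hc, fun q hq => hBB q (hB q hq), heq⟩

theorem RepC_zero {B : ℕ×ℕ×ℕ×ℕ → Prop} : RepC B (fun _ _ => 0) :=
  ⟨∅, fun _ _ => 0, fun _ => contDiffOn_const, by simp, by simp⟩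

theorem RepC_single {B : ℕ×ℕ×ℕ×ℕ → Prop} {p : ℕ×ℕ×ℕ×ℕ} (hp : B p) :
    RepC B (fun F x => NP p F x) := by
  refine ⟨{p}, fun _ _ => 1, fun _ => contDiffOn_const, ?_, ?_⟩
  · intro q hq; rw [Finset.mem_singleton] at hq; subst hq; exact hp
  · intro F hF x hx; simp

theorem RepC_add {B : ℕ×ℕ×ℕ×ℕ → Prop} {h₁ h₂ : (V3 → ℝ) → V3 → ℝ} (ha : RepC B h₁)
    (hb : RepC B h₂) : RepC B (fun F x => h₁ F x + h₂ F x) := by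
  obtain ⟨T₁, c₁, hc₁, hB₁, he₁⟩ := ha
  obtain ⟨T₂, c₂, hc₂, hB₂, he₂⟩ := hb
  refine ⟨T₁ ∪ T₂, fun q x => (if q ∈ T₁ then c₁ q x else 0) + (if q ∈ T₂ then c₂ q x else 0),
    ?_, ?_, ?_⟩
  · intro q
    apply ContDiffOn.add <;> split <;>
      first | exact hc₁ q | exact hc₂ q | exact contDiffOn_const
  · intro q hq
    rcases Finset.mem_union.mp hq with h | h
    · exact hB₁ q h
    · exact hB₂ q h
  · intro F hF x hx
    show h₁ F x + h₂ F x = _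
    rw [he₁ F hF x hx, he₂ F hF x hx, ← sum_union_ite T₁ T₂ (fun q => c₁ q x * NP q F x)
      (fun q => c₂ q x * NP q F x)]
    exact Finset.sum_congr rfl fun q _ => by rw [add_mul, ite_mul, ite_mul]; simp

theorem RepC_smul {B : ℕ×ℕ×ℕ×ℕ → Prop} {h : (V3 → ℝ) → V3 → ℝ} {k : V3 → ℝ}
    (hk : ContDiffOn ℝ (⊤ : ℕ∞) k U0) (hh : RepC B h) : RepC B (fun F x => k x * h F x) := by
  obtain ⟨T, c, hc, hB, he⟩ := hh
  refine ⟨T, fun q x => k x * c q x, fun q => hk.mul (hc q), hB, ?_⟩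
  intro F hF x hx
  show k x * h F x = _
  rw [he F hF x hx, Finset.mul_sum]
  exact Finset.sum_congr rfl fun q _ => by ring

theorem RepC_cmul {B : ℕ×ℕ×ℕ×ℕ → Prop} {h : (V3 → ℝ) → V3 → ℝ} (a : ℝ) (hh : RepC B h) :
    RepC B (fun F x => a * h F x) :=
  RepC_smul (contDiffOn_const) hh

theorem RepC_finsum {B : ℕ×ℕ×ℕ×ℕ → Prop} {ι : Type*} {T : Finset ι}
    {h : ι → (V3 → ℝ) → V3 → ℝ} (hh : ∀ i ∈ T, RepC B (h i)) :
    RepC B (fun F x => ∑ i ∈ T, h i F x) := by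
  classical
  induction T using Finset.cons_induction with
  | empty => exact RepC_congr (fun F hF x hx => by simp) RepC_zero
  | cons a T ha ih =>
    have h1 : RepC B (fun F x => h a F x + ∑ i ∈ T, h i F x) :=
      RepC_add (hh a (Finset.mem_cons_self a T)) (ih fun i hi => hh i (Finset.mem_cons.mpr (Or.inr hi)))
    exact RepC_congr (fun F hF x hx => by rw [Finset.sum_cons]) h1

/-! ### smoothness on U0 -/

theorem contDiffOn_pd {f : V3 → ℝ} (hf : ContDiffOn ℝ (⊤ : ℕ∞) f U0) (i : Fin 3) :
    ContDiffOn ℝ (⊤ : ℕ∞) (pd i f) U0 := by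
  have h1 : ContDiffOn ℝ (⊤ : ℕ∞) (fun x => fderiv ℝ f x) U0 :=
    hf.fderiv_of_isOpen isOpen_U0 (by simp)
  exact h1.clm_apply contDiffOn_const

theorem contDiffOn_LamOp {f : V3 → ℝ} (hf : ContDiffOn ℝ (⊤ : ℕ∞) f U0) :
    ContDiffOn ℝ (⊤ : ℕ∞) (LamOp f) U0 := by
  unfold LamOp
  exact ContDiffOn.sum fun i _ => ((contDiff_coord i).contDiffOn).mul (contDiffOn_pd hf i)

theorem contDiffOn_angOp {f : V3 → ℝ} (hf : ContDiffOn ℝ (⊤ : ℕ∞) f U0) (i j : Fin 3) :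
    ContDiffOn ℝ (⊤ : ℕ∞) (angOp i j f) U0 := by
  unfold angOp
  exact (((contDiff_coord i).contDiffOn).mul (contDiffOn_pd hf j)).sub
    (((contDiff_coord j).contDiffOn).mul (contDiffOn_pd hf i))

theorem diffAt_of_U0 {f : V3 → ℝ} (hf : ContDiffOn ℝ (⊤ : ℕ∞) f U0) {x : V3} (hx : x ≠ 0) :
    DifferentiableAt ℝ f x :=
  ((hf.contDiffAt (isOpen_U0.mem_nhds hx)).differentiableAt (by simp))

/-! ### closure of RepC under the operators -/

theorem RepC_Lam {B B' : ℕ×ℕ×ℕ×ℕ → Prop} {h : (V3 → ℝ) → V3 → ℝ} (hh : RepC B h)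
    (hB1 : ∀ q, B q → B' q) (hB2 : ∀ q, B q → B' (q.1+1, q.2)) :
    RepC B' (fun F x => LamOp (h F) x) := by
  obtain ⟨T, c, hc, hB, he⟩ := hh
  have key : ∀ F, ContDiff ℝ (⊤ : ℕ∞) F → ∀ x : V3, x ≠ 0 →
      (∑ q ∈ T, (LamOp (c q) x * NP q F x + c q x * NP (q.1+1, q.2) F x))
        = LamOp (h F) x := by
    intro F hF x hx
    have hloc : h F =ᶠ[nhds x] (fun y => ∑ q ∈ T, c q y * NP q F y) :=
      Filter.eventuallyEq_of_mem (isOpen_U0.mem_nhds hx) (fun y hy => he F hF y hy)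
    rw [LamOp_congr hloc]
    rw [LamOp_sum (fun q _ => (diffAt_of_U0 (hc q) hx).fun_mul
      ((cd_diff (contDiff_NP hF q)) x))]
    refine (Finset.sum_congr rfl fun q _ => ?_).symm
    rw [LamOp_mul (diffAt_of_U0 (hc q) hx) (cd_diff (contDiff_NP hF q) x), Lam_NP]
    ring
  refine RepC_congr key (RepC_finsum fun q hq => ?_)
  exact RepC_add
    (RepC_smul (contDiffOn_LamOp (hc q)) (RepC_single (hB1 q (hB q hq))))
    (RepC_smul (hc q) (RepC_single (hB2 q (hB q hq))))

theorem RepC_A1 {B B' : ℕ×ℕ×ℕ×ℕ → Prop} {h : (V3 → ℝ) → V3 → ℝ} (hh : RepC B h)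
    (hB1 : ∀ q, B q → B' q) (hB2 : ∀ q, B q → B' (q.1, q.2.1+1, q.2.2)) :
    RepC B' (fun F x => angOp 0 1 (h F) x) := by
  obtain ⟨T, c, hc, hB, he⟩ := hh
  have key : ∀ F, ContDiff ℝ (⊤ : ℕ∞) F → ∀ x : V3, x ≠ 0 →
      (∑ q ∈ T, (angOp 0 1 (c q) x * NP q F x + c q x * NP (q.1, q.2.1+1, q.2.2) F x))
        = angOp 0 1 (h F) x := by
    intro F hF x hx
    have hloc : h F =ᶠ[nhds x] (fun y => ∑ q ∈ T, c q y * NP q F y) :=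
      Filter.eventuallyEq_of_mem (isOpen_U0.mem_nhds hx) (fun y hy => he F hF y hy)
    rw [angOp_congr hloc]
    rw [angOp_sum 0 1 (fun q _ => (diffAt_of_U0 (hc q) hx).fun_mul
      ((cd_diff (contDiff_NP hF q)) x))]
    refine (Finset.sum_congr rfl fun q _ => ?_).symm
    rw [angOp_mul 0 1 (diffAt_of_U0 (hc q) hx) (cd_diff (contDiff_NP hF q) x), A1_NP hF]
    ring
  refine RepC_congr key (RepC_finsum fun q hq => ?_)
  exact RepC_add
    (RepC_smul (contDiffOn_angOp (hc q) 0 1) (RepC_single (hB1 q (hB q hq))))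
    (RepC_smul (hc q) (RepC_single (hB2 q (hB q hq))))

theorem RepC_A23 {B B' : ℕ×ℕ×ℕ×ℕ → Prop} {h : (V3 → ℝ) → V3 → ℝ} (i j : Fin 3)
    (hij : (i = 0 ∧ j = 2) ∨ (i = 1 ∧ j = 2)) (hh : RepC B h)
    (hB1 : ∀ q, B q → B' q)
    (hB2 : ∀ q r, B q → r.1 = q.1 → 1 ≤ angI r → angI r ≤ angI q + 1 → B' r) :
    RepC B' (fun F x => angOp i j (h F) x) := by
  obtain ⟨T, c, hc, hB, he⟩ := hh
  choose TT ee hTT hee using fun q : ℕ×ℕ×ℕ×ℕ => NExp i j hij q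
  have key : ∀ F, ContDiff ℝ (⊤ : ℕ∞) F → ∀ x : V3, x ≠ 0 →
      (∑ q ∈ T, (angOp i j (c q) x * NP q F x + c q x * ∑ r ∈ TT q, ee q r * NP r F x))
        = angOp i j (h F) x := by
    intro F hF x hx
    have hloc : h F =ᶠ[nhds x] (fun y => ∑ q ∈ T, c q y * NP q F y) :=
      Filter.eventuallyEq_of_mem (isOpen_U0.mem_nhds hx) (fun y hy => he F hF y hy)
    rw [angOp_congr hloc]
    rw [angOp_sum i j (fun q _ => (diffAt_of_U0 (hc q) hx).fun_mul
      ((cd_diff (contDiff_NP hF q)) x))]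
    refine (Finset.sum_congr rfl fun q _ => ?_).symm
    rw [angOp_mul i j (diffAt_of_U0 (hc q) hx) (cd_diff (contDiff_NP hF q) x),
      hee q F hF x]
    ring
  refine RepC_congr key (RepC_finsum fun q hq => ?_)
  refine RepC_add
    (RepC_smul (contDiffOn_angOp (hc q) i j) (RepC_single (hB1 q (hB q hq)))) ?_
  refine RepC_smul (hc q) (RepC_finsum fun r hr => ?_)
  refine RepC_cmul (ee q r) (RepC_single ?_)
  obtain ⟨h1, h2, h3⟩ := hTT q r hr
  exact hB2 q r (hB q hq) h1 h2 h3

/-! ### rectangular derivatives via radial/angular ones -/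

def r2 (x : V3) : ℝ := x 0 ^ 2 + x 1 ^ 2 + x 2 ^ 2

theorem r2_ne {x : V3} (hx : x ≠ 0) : r2 x ≠ 0 := by
  intro h
  unfold r2 at h
  have h0 : x 0 = 0 := by nlinarith [sq_nonneg (x 0), sq_nonneg (x 1), sq_nonneg (x 2)]
  have h1 : x 1 = 0 := by nlinarith [sq_nonneg (x 0), sq_nonneg (x 1), sq_nonneg (x 2)]
  have h2 : x 2 = 0 := by nlinarith [sq_nonneg (x 0), sq_nonneg (x 1), sq_nonneg (x 2)]
  apply hx
  funext i
  fin_cases i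
  · exact h0
  · exact h1
  · exact h2

theorem contDiff_r2 : ContDiff ℝ (⊤ : ℕ∞) r2 := by
  unfold r2
  exact (((contDiff_coord 0).pow 2).add ((contDiff_coord 1).pow 2)).add ((contDiff_coord 2).pow 2)

theorem coefOn (t : Fin 3) (sgn : ℝ) : ContDiffOn ℝ (⊤ : ℕ∞) (fun x : V3 => sgn * x t / r2 x) U0 := by
  refine ContDiffOn.div ?_ contDiff_r2.contDiffOn (fun x hx => r2_ne hx)
  exact (contDiff_const.mul (contDiff_coord t)).contDiffOn

theorem pd0_base (f : V3 → ℝ) {x : V3} (hx : x ≠ 0) :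
    pd 0 f x = (x 0 * LamOp f x - x 1 * angOp 0 1 f x - x 2 * angOp 0 2 f x) / r2 x := by
  rw [eq_div_iff (r2_ne hx)]
  unfold LamOp angOp r2
  rw [Fin.sum_univ_three]
  ring

theorem pd1_base (f : V3 → ℝ) {x : V3} (hx : x ≠ 0) :
    pd 1 f x = (x 1 * LamOp f x + x 0 * angOp 0 1 f x - x 2 * angOp 1 2 f x) / r2 x := by
  rw [eq_div_iff (r2_ne hx)]
  unfold LamOp angOp r2
  rw [Fin.sum_univ_three]
  ring

theorem pd2_base (f : V3 → ℝ) {x : V3} (hx : x ≠ 0) :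
    pd 2 f x = (x 2 * LamOp f x + x 0 * angOp 0 2 f x + x 1 * angOp 1 2 f x) / r2 x := by
  rw [eq_div_iff (r2_ne hx)]
  unfold LamOp angOp r2
  rw [Fin.sum_univ_three]
  ring

/-- `∂_t ∘ NP p` expansion. -/
theorem RepC_pdNP (t : Fin 3) (p : ℕ×ℕ×ℕ×ℕ) :
    RepC (fun q => 1 ≤ totI q ∧ totI q ≤ totI p + 1 ∧ q.1 ≤ p.1 + 1)
      (fun F x => pd t (NP p F) x) := by
  have hBlam : (fun q : ℕ×ℕ×ℕ×ℕ => 1 ≤ totI q ∧ totI q ≤ totI p + 1 ∧ q.1 ≤ p.1 + 1)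
      (p.1+1, p.2) := by
    simp only [totI]; omega
  have hBa1 : (fun q : ℕ×ℕ×ℕ×ℕ => 1 ≤ totI q ∧ totI q ≤ totI p + 1 ∧ q.1 ≤ p.1 + 1)
      (p.1, p.2.1+1, p.2.2) := by
    simp only [totI]; omega
  have hNE : ∀ (i j : Fin 3), ((i = 0 ∧ j = 2) ∨ (i = 1 ∧ j = 2)) →
      RepC (fun q => 1 ≤ totI q ∧ totI q ≤ totI p + 1 ∧ q.1 ≤ p.1 + 1)
        (fun F x => angOp i j (NP p F) x) := by
    intro i j hij
    obtain ⟨T, e, hT, heq⟩ := NExp i j hij p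
    refine RepC_congr (h₁ := fun F x => ∑ r ∈ T, e r * NP r F x)
      (fun F hF x hx => (heq F hF x).symm) ?_
    refine RepC_finsum fun r hr => RepC_cmul (e r) (RepC_single ?_)
    obtain ⟨h1, h2, h3⟩ := hT r hr
    simp only [totI, angI] at *
    omega
  fin_cases t
  · show RepC (fun q => 1 ≤ totI q ∧ totI q ≤ totI p + 1 ∧ q.1 ≤ p.1 + 1)
      (fun F x => pd 0 (NP p F) x)
    refine RepC_congr (h₁ := fun F x =>
      (fun y : V3 => (1:ℝ) * y 0 / r2 y) x * NP (p.1+1, p.2) F x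
      + (fun y : V3 => (-1:ℝ) * y 1 / r2 y) x * NP (p.1, p.2.1+1, p.2.2) F x
      + (fun y : V3 => (-1:ℝ) * y 2 / r2 y) x * angOp 0 2 (NP p F) x) ?_ ?_
    · intro F hF x hx
      dsimp only
      rw [pd0_base (NP p F) hx, ← Lam_NP p F, ← A1_NP hF p]
      field_simp
      ring
    · exact RepC_add (RepC_add
        (RepC_smul (coefOn 0 1) (RepC_single hBlam))
        (RepC_smul (coefOn 1 (-1)) (RepC_single hBa1)))
        (RepC_smul (coefOn 2 (-1)) (hNE 0 2 (Or.inl ⟨rfl, rfl⟩)))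
  · show RepC (fun q => 1 ≤ totI q ∧ totI q ≤ totI p + 1 ∧ q.1 ≤ p.1 + 1)
      (fun F x => pd 1 (NP p F) x)
    refine RepC_congr (h₁ := fun F x =>
      (fun y : V3 => (1:ℝ) * y 1 / r2 y) x * NP (p.1+1, p.2) F x
      + (fun y : V3 => (1:ℝ) * y 0 / r2 y) x * NP (p.1, p.2.1+1, p.2.2) F x
      + (fun y : V3 => (-1:ℝ) * y 2 / r2 y) x * angOp 1 2 (NP p F) x) ?_ ?_
    · intro F hF x hx
      dsimp only
      rw [pd1_base (NP p F) hx, ← Lam_NP p F, ← A1_NP hF p]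
      field_simp
      ring
    · exact RepC_add (RepC_add
        (RepC_smul (coefOn 1 1) (RepC_single hBlam))
        (RepC_smul (coefOn 0 1) (RepC_single hBa1)))
        (RepC_smul (coefOn 2 (-1)) (hNE 1 2 (Or.inr ⟨rfl, rfl⟩)))
  · show RepC (fun q => 1 ≤ totI q ∧ totI q ≤ totI p + 1 ∧ q.1 ≤ p.1 + 1)
      (fun F x => pd 2 (NP p F) x)
    refine RepC_congr (h₁ := fun F x =>
      (fun y : V3 => (1:ℝ) * y 2 / r2 y) x * NP (p.1+1, p.2) F x
      + (fun y : V3 => (1:ℝ) * y 0 / r2 y) x * angOp 0 2 (NP p F) x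
      + (fun y : V3 => (1:ℝ) * y 1 / r2 y) x * angOp 1 2 (NP p F) x) ?_ ?_
    · intro F hF x hx
      dsimp only
      rw [pd2_base (NP p F) hx, ← Lam_NP p F]
      field_simp
    · exact RepC_add (RepC_add
        (RepC_smul (coefOn 2 1) (RepC_single hBlam))
        (RepC_smul (coefOn 0 1) (hNE 0 2 (Or.inl ⟨rfl, rfl⟩))))
        (RepC_smul (coefOn 1 1) (hNE 1 2 (Or.inr ⟨rfl, rfl⟩)))

/-! ### the main commutator expansion -/

theorem mainRep (s : Fin 3) (m n1 n2 n3 : ℕ) :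
    RepC (fun q => 1 ≤ totI q ∧ totI q ≤ m + n1 + n2 + n3
        ∧ q.1 ≤ m + (if n1 + n2 + n3 = 0 then 0 else 1))
      (fun F x => Ndell m n1 n2 n3 (pd s F) x - pd s (Ndell m n1 n2 n3 F) x) := by
  induction m with
  | succ m ih =>
    refine RepC_congr (h₁ := fun F x =>
        LamOp (fun y => Ndell m n1 n2 n3 (pd s F) y - pd s (Ndell m n1 n2 n3 F) y) x
        + (-1 : ℝ) * pd s (Ndell m n1 n2 n3 F) x) ?_ ?_
    · intro F hF x hx
      rw [Ndell_succ_m m n1 n2 n3 (pd s F), Ndell_succ_m m n1 n2 n3 F,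
        pd_LamOp (contDiff_Ndell hF m n1 n2 n3) s x,
        LamOp_sub (cd_diff (contDiff_Ndell (contDiff_pd hF s) m n1 n2 n3) x)
          (cd_diff (contDiff_pd (contDiff_Ndell hF m n1 n2 n3) s) x)]
      ring
    · refine RepC_add (RepC_Lam ih ?_ ?_)
        (RepC_cmul (-1) (RepC_mono ?_ (RepC_pdNP s (m, n1, n2, n3))))
      · intro q hq
        simp only [totI] at *
        split_ifs at * <;> omega
      · intro q hq
        simp only [totI] at *
        split_ifs at * <;> omega
      · intro q hq
        simp only [totI] at *
        split_ifs at * <;> omega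
  | zero =>
    induction n1 with
    | succ n1 ih1 =>
      refine RepC_congr (h₁ := fun F x =>
          angOp 0 1 (fun y => Ndell 0 n1 n2 n3 (pd s F) y - pd s (Ndell 0 n1 n2 n3 F) y) x
          + (-(if (0 : Fin 3) = s then (1:ℝ) else 0)) * pd 1 (Ndell 0 n1 n2 n3 F) x
          + (if (1 : Fin 3) = s then (1:ℝ) else 0) * pd 0 (Ndell 0 n1 n2 n3 F) x) ?_ ?_
      · intro F hF x hx
        rw [Ndell_succ_n1 n1 n2 n3 (pd s F), Ndell_succ_n1 n1 n2 n3 F,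
          pd_angOp (contDiff_Ndell hF 0 n1 n2 n3) s 0 1 x,
          angOp_sub 0 1 (cd_diff (contDiff_Ndell (contDiff_pd hF s) 0 n1 n2 n3) x)
            (cd_diff (contDiff_pd (contDiff_Ndell hF 0 n1 n2 n3) s) x)]
        ring
      · refine RepC_add (RepC_add (RepC_A1 ih1 ?_ ?_)
          (RepC_cmul _ (RepC_mono ?_ (RepC_pdNP 1 (0, n1, n2, n3)))))
          (RepC_cmul _ (RepC_mono ?_ (RepC_pdNP 0 (0, n1, n2, n3)))) <;>
        · intro q hq
          simp only [totI] at *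
          split_ifs at * <;> omega
    | zero =>
      induction n2 with
      | succ n2 ih2 =>
        refine RepC_congr (h₁ := fun F x =>
            angOp 0 2 (fun y => Ndell 0 0 n2 n3 (pd s F) y - pd s (Ndell 0 0 n2 n3 F) y) x
            + (-(if (0 : Fin 3) = s then (1:ℝ) else 0)) * pd 2 (Ndell 0 0 n2 n3 F) x
            + (if (2 : Fin 3) = s then (1:ℝ) else 0) * pd 0 (Ndell 0 0 n2 n3 F) x) ?_ ?_
        · intro F hF x hx
          rw [Ndell_succ_n2 n2 n3 (pd s F), Ndell_succ_n2 n2 n3 F,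
            pd_angOp (contDiff_Ndell hF 0 0 n2 n3) s 0 2 x,
            angOp_sub 0 2 (cd_diff (contDiff_Ndell (contDiff_pd hF s) 0 0 n2 n3) x)
              (cd_diff (contDiff_pd (contDiff_Ndell hF 0 0 n2 n3) s) x)]
          ring
        · refine RepC_add (RepC_add
            (RepC_A23 0 2 (Or.inl ⟨rfl, rfl⟩) ih2 ?_ ?_)
            (RepC_cmul _ (RepC_mono ?_ (RepC_pdNP 2 (0, 0, n2, n3)))))
            (RepC_cmul _ (RepC_mono ?_ (RepC_pdNP 0 (0, 0, n2, n3)))) <;>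
          · intro q hq
            try intro r
            simp only [totI, angI] at *
            split_ifs at * <;> omega
      | zero =>
        induction n3 with
        | succ n3 ih3 =>
          refine RepC_congr (h₁ := fun F x =>
              angOp 1 2 (fun y => Ndell 0 0 0 n3 (pd s F) y - pd s (Ndell 0 0 0 n3 F) y) x
              + (-(if (1 : Fin 3) = s then (1:ℝ) else 0)) * pd 2 (Ndell 0 0 0 n3 F) x
              + (if (2 : Fin 3) = s then (1:ℝ) else 0) * pd 1 (Ndell 0 0 0 n3 F) x) ?_ ?_
          · intro F hF x hx
            rw [Ndell_succ_n3 n3 (pd s F), Ndell_succ_n3 n3 F,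
              pd_angOp (contDiff_Ndell hF 0 0 0 n3) s 1 2 x,
              angOp_sub 1 2 (cd_diff (contDiff_Ndell (contDiff_pd hF s) 0 0 0 n3) x)
                (cd_diff (contDiff_pd (contDiff_Ndell hF 0 0 0 n3) s) x)]
            ring
          · refine RepC_add (RepC_add
              (RepC_A23 1 2 (Or.inr ⟨rfl, rfl⟩) ih3 ?_ ?_)
              (RepC_cmul _ (RepC_mono ?_ (RepC_pdNP 2 (0, 0, 0, n3)))))
              (RepC_cmul _ (RepC_mono ?_ (RepC_pdNP 1 (0, 0, 0, n3)))) <;>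
            · intro q hq
              try intro r
              simp only [totI, angI] at *
              split_ifs at * <;> omega
        | zero =>
          refine RepC_congr (h₁ := fun _ _ => 0) ?_ RepC_zero
          intro F hF x hx
          rw [Ndell_zero (pd s F), Ndell_zero F]
          ring

/-! ### final assembly -/

theorem final_branch (s : Fin 3) (m n1 n2 n3 : ℕ) (bnd : ℕ)
    (hbnd : ∀ q : ℕ×ℕ×ℕ×ℕ, (1 ≤ totI q ∧ totI q ≤ m + n1 + n2 + n3
        ∧ q.1 ≤ m + (if n1 + n2 + n3 = 0 then 0 else 1)) →
      q ∈ (tIdx (m + n1 + n2 + n3)).filter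
        (fun p => 1 ≤ p.1 + p.2.1 + p.2.2.1 + p.2.2.2 ∧ p.1 ≤ bnd)) :
    ∃ K : ℕ × ℕ × ℕ × ℕ → V3 → ℝ,
      (∀ p, ContDiffOn ℝ (⊤ : ℕ∞) (K p) {x : V3 | x ≠ 0}) ∧
      ∀ F : V3 → ℝ, ContDiff ℝ (⊤ : ℕ∞) F → ∀ x : V3, x ≠ 0 →
        Ndell m n1 n2 n3 (pd s F) x - pd s (Ndell m n1 n2 n3 F) x
          = ∑ p ∈ (tIdx (m + n1 + n2 + n3)).filter
                (fun p => 1 ≤ p.1 + p.2.1 + p.2.2.1 + p.2.2.2 ∧ p.1 ≤ bnd),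
              K p x * Ndell p.1 p.2.1 p.2.2.1 p.2.2.2 F x := by
  obtain ⟨T, c, hc, hB, he⟩ := mainRep s m n1 n2 n3
  have hsub : T ⊆ (tIdx (m + n1 + n2 + n3)).filter
      (fun p => 1 ≤ p.1 + p.2.1 + p.2.2.1 + p.2.2.2 ∧ p.1 ≤ bnd) :=
    fun q hq => hbnd q (hB q hq)
  refine ⟨fun p => if p ∈ T then c p else 0, ?_, ?_⟩
  · intro p
    dsimp only
    split
    · exact hc p
    · exact contDiffOn_const
  · intro F hF x hx
    have heq := he F hF x hx
    dsimp only at heq ⊢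
    rw [heq]
    have : ∀ p : ℕ×ℕ×ℕ×ℕ, (if p ∈ T then c p else 0) x * Ndell p.1 p.2.1 p.2.2.1 p.2.2.2 F x
        = if p ∈ T then c p x * NP p F x else 0 := by
      intro p
      split <;> simp [NP]
    simp only [this]
    rw [Finset.sum_ite_mem, Finset.inter_eq_right.mpr hsub]

theorem higher_order_commutator_identities' (s : Fin 3) (m n1 n2 n3 : ℕ) :
    (0 < n1 + n2 + n3 →
      ∃ K : ℕ × ℕ × ℕ × ℕ → V3 → ℝ,
        (∀ p, ContDiffOn ℝ (⊤ : ℕ∞) (K p) {x : V3 | x ≠ 0}) ∧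
        ∀ F : V3 → ℝ, ContDiff ℝ (⊤ : ℕ∞) F → ∀ x : V3, x ≠ 0 →
          Ndell m n1 n2 n3 (pd s F) x - pd s (Ndell m n1 n2 n3 F) x
            = ∑ p ∈ (tIdx (m + n1 + n2 + n3)).filter
                  (fun p => 1 ≤ p.1 + p.2.1 + p.2.2.1 + p.2.2.2 ∧ p.1 ≤ m + 1),
                K p x * Ndell p.1 p.2.1 p.2.2.1 p.2.2.2 F x) ∧
    (n1 + n2 + n3 = 0 →
      ∃ K : ℕ × ℕ × ℕ × ℕ → V3 → ℝ,
        (∀ p, ContDiffOn ℝ (⊤ : ℕ∞) (K p) {x : V3 | x ≠ 0}) ∧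
        ∀ F : V3 → ℝ, ContDiff ℝ (⊤ : ℕ∞) F → ∀ x : V3, x ≠ 0 →
          Ndell m 0 0 0 (pd s F) x - pd s (Ndell m 0 0 0 F) x
            = ∑ p ∈ (tIdx m).filter
                  (fun p => 1 ≤ p.1 + p.2.1 + p.2.2.1 + p.2.2.2 ∧ p.1 ≤ m),
                K p x * Ndell p.1 p.2.1 p.2.2.1 p.2.2.2 F x) := by
  constructor
  · intro hn
    refine final_branch s m n1 n2 n3 (m+1) ?_
    intro q hq
    simp only [tIdx, Finset.mem_filter, Finset.mem_product, Finset.mem_range, totI] at *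
    split_ifs at hq <;> omega
  · intro hn
    have h0 : ∀ q : ℕ×ℕ×ℕ×ℕ, (1 ≤ totI q ∧ totI q ≤ m + 0 + 0 + 0
        ∧ q.1 ≤ m + (if 0 + 0 + 0 = 0 then 0 else 1)) →
        q ∈ (tIdx (m + 0 + 0 + 0)).filter
          (fun p => 1 ≤ p.1 + p.2.1 + p.2.2.1 + p.2.2.2 ∧ p.1 ≤ m) := by
      intro q hq
      simp only [tIdx, Finset.mem_filter, Finset.mem_product, Finset.mem_range, totI] at *
      omega
    have := final_branch s m 0 0 0 m h0
    simpa using this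

end CommutatorProofs


/-- **Higher order commutator identities** (Lemma C.1).  The commutator
`[Λ^m∂̸^n, ∂_s]` can be expanded as a combination of the operators `Λ^a∂̸^b` with
`1 ≤ a + |b| ≤ m + |n|` (and `a ≤ m+1`, resp. `a ≤ m` when `|n| = 0`), with coefficient
functions smooth away from the origin. -/
theorem higher_order_commutator_identities (s : Fin 3) (m n1 n2 n3 : ℕ) :
    (0 < n1 + n2 + n3 →
      ∃ K : ℕ × ℕ × ℕ × ℕ → V3 → ℝ,
        (∀ p, ContDiffOn ℝ (⊤ : ℕ∞) (K p) {x : V3 | x ≠ 0}) ∧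
        ∀ F : V3 → ℝ, ContDiff ℝ (⊤ : ℕ∞) F → ∀ x : V3, x ≠ 0 →
          Ndell m n1 n2 n3 (pd s F) x - pd s (Ndell m n1 n2 n3 F) x
            = ∑ p ∈ (tIdx (m + n1 + n2 + n3)).filter
                  (fun p => 1 ≤ p.1 + p.2.1 + p.2.2.1 + p.2.2.2 ∧ p.1 ≤ m + 1),
                K p x * Ndell p.1 p.2.1 p.2.2.1 p.2.2.2 F x) ∧
    (n1 + n2 + n3 = 0 →
      ∃ K : ℕ × ℕ × ℕ × ℕ → V3 → ℝ,
        (∀ p, ContDiffOn ℝ (⊤ : ℕ∞) (K p) {x : V3 | x ≠ 0}) ∧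
        ∀ F : V3 → ℝ, ContDiff ℝ (⊤ : ℕ∞) F → ∀ x : V3, x ≠ 0 →
          Ndell m 0 0 0 (pd s F) x - pd s (Ndell m 0 0 0 F) x
            = ∑ p ∈ (tIdx m).filter
                  (fun p => 1 ≤ p.1 + p.2.1 + p.2.2.1 + p.2.2.2 ∧ p.1 ≤ m),
                K p x * Ndell p.1 p.2.1 p.2.2.1 p.2.2.2 F x) := by
  exact higher_order_commutator_identities' s m n1 n2 n3
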